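/- arXiv:1709.06880 — 3 statements merged into one kernel-verified Lean document; each statement's English description precedes it below -/
import Mathlib

section
/- Let K ≥ 2 be an integer, ε ≥ 0, B ≥ 0 and 0 ≤ q < 1. Suppose nonnegative real numbers e_k^{(j)}, for k ∈ {1,…,K} and j ≥ 0, satisfy e_k^{(0)} ≤ B for every k, and for every j ≥ 0 and every k the Gauss–Seidel-type inequality e_k^{(j+1)} ≤ ε + (q/(K−1)) ( Σ_{i=1}^{k−1} e_i^{(j+1)} + Σ_{i=k+1}^{K} e_i^{(j)} ). Then for every j ≥ 0 and every k ∈ {1,…,K}: e_k^{(j+1)} ≤ ε/(1−q) + B q^{⌈(jK+k)/(K−1)⌉}, where ⌈·⌉ denotes the ceiling (smallest integer greater than or equal to the argument). (This is the K-component quantitative core of Theorems 3.2 and 3.3: in the paper e_k^{(j+1)} = ‖s^{E,(j)}_k‖_{L^2} is the L^2 norm of the k-th residual shape function after sweep j of the Gauss–Seidel RDBR, q = M^2(K−1)β with β the well-differentiation parameter of the K phase functions, and ε is the per-step regression accuracy, which in the noisy case absorbs the noise-induced error for L large enough.) -/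
/-!
Read the components in sweep order: `e j k` sits at position `j * K + k`, and the recursion then
bounds the entry at position `n` by `ε + q/(K-1)` times the sum of the `K - 1` entries at positions
`n - (K-1), …, n - 1`. By strong induction on the position, every entry at position `n` is bounded
by `ε/(1-q) + B q^⌈(n-K)/(K-1)⌉`: the bound is antitone in `n`, `ε/(1-q)` is the fixed point of
`x ↦ ε + q x`, and moving back by `K - 1` positions lowers the exponent by at most one.
-/

open Finset

namespace GaussSeidel

noncomputable def bound (K : ℕ) (ε B q : ℝ) (n : ℕ) : ℝ :=
  ε / (1 - q) + B * q ^ ⌈((n - K : ℕ) : ℝ) / ((K : ℝ) - 1)⌉₊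

variable {K : ℕ} {ε B q : ℝ}

theorem bound_antitone (hK : 1 ≤ K) (hB : 0 ≤ B) (hq0 : 0 ≤ q) (hq1 : q ≤ 1) :
    Antitone (bound K ε B q) := by
  intro m n hmn
  have hK' : (0 : ℝ) ≤ (K : ℝ) - 1 := by
    have : (1 : ℝ) ≤ K := by exact_mod_cast hK
    linarith
  unfold bound
  gcongr ε / (1 - q) + B * ?_
  refine pow_le_pow_of_le_one hq0 hq1 (Nat.ceil_mono ?_)
  gcongr

theorem self_le_bound_of_le (hε : 0 ≤ ε) (hq1 : q < 1) {n : ℕ} (hn : n ≤ K) :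
    B ≤ bound K ε B q n := by
  have : 0 ≤ ε / (1 - q) := div_nonneg hε (by linarith)
  simp [bound, Nat.sub_eq_zero_of_le hn, this]

theorem add_mul_bound_le (hK : 2 ≤ K) (hB : 0 ≤ B) (hq0 : 0 ≤ q) (hq1 : q < 1) (n : ℕ) :
    ε + q * bound K ε B q (n - (K - 1)) ≤ bound K ε B q n := by
  have hd : (0 : ℝ) < (K : ℝ) - 1 := by
    have : (2 : ℝ) ≤ K := by exact_mod_cast hK
    linarith
  set d : ℝ := (K : ℝ) - 1
  have hexp : ⌈((n - K : ℕ) : ℝ) / d⌉₊ ≤ ⌈((n - (K - 1) - K : ℕ) : ℝ) / d⌉₊ + 1 := by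
    have hpos : n - K ≤ (n - (K - 1) - K) + (K - 1) := by omega
    have hcast : ((n - K : ℕ) : ℝ) ≤ ((n - (K - 1) - K : ℕ) : ℝ) + d := by
      have := (Nat.cast_le (α := ℝ)).mpr hpos
      rwa [Nat.cast_add, Nat.cast_sub (show 1 ≤ K by omega), Nat.cast_one] at this
    calc ⌈((n - K : ℕ) : ℝ) / d⌉₊ ≤ ⌈((n - (K - 1) - K : ℕ) : ℝ) / d + 1⌉₊ := by
          refine Nat.ceil_mono ?_
          rwa [div_add_one hd.ne', div_le_div_iff_of_pos_right hd]
      _ ≤ ⌈((n - (K - 1) - K : ℕ) : ℝ) / d⌉₊ + 1 := by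
          simpa using Nat.ceil_add_le (((n - (K - 1) - K : ℕ) : ℝ) / d) 1
  have hfix : ε + q * (ε / (1 - q)) = ε / (1 - q) := by
    field_simp [(by linarith : (1 - q) ≠ 0)]
    ring
  unfold bound
  calc ε + q * (ε / (1 - q) + B * q ^ ⌈((n - (K - 1) - K : ℕ) : ℝ) / d⌉₊)
      = ε / (1 - q) + B * q ^ (⌈((n - (K - 1) - K : ℕ) : ℝ) / d⌉₊ + 1) := by
        rw [mul_add, ← add_assoc, hfix, pow_succ]
        ring
    _ ≤ ε / (1 - q) + B * q ^ ⌈((n - K : ℕ) : ℝ) / d⌉₊ := by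
        gcongr ε / (1 - q) + B * ?_
        exact pow_le_pow_of_le_one hq0 hq1.le hexp

theorem sum_Ico_add_sum_Ioc_le {f g : ℕ → ℝ} {k : ℕ} {C : ℝ} (hk : k ∈ Icc 1 K)
    (hf : ∀ i ∈ Ico 1 k, f i ≤ C) (hg : ∀ i ∈ Ioc k K, g i ≤ C) :
    (∑ i ∈ Ico 1 k, f i) + ∑ i ∈ Ioc k K, g i ≤ ((K : ℝ) - 1) * C := by
  obtain ⟨hk1, hkK⟩ := mem_Icc.mp hk
  have hcard : (#(Ico 1 k) : ℝ) + #(Ioc k K) = (K : ℝ) - 1 := by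
    rw [Nat.card_Ico, Nat.card_Ioc, Nat.cast_sub hk1, Nat.cast_sub hkK]
    push_cast
    ring
  calc (∑ i ∈ Ico 1 k, f i) + ∑ i ∈ Ioc k K, g i ≤ #(Ico 1 k) • C + #(Ioc k K) • C :=
        add_le_add (sum_le_card_nsmul _ _ _ hf) (sum_le_card_nsmul _ _ _ hg)
    _ = ((K : ℝ) - 1) * C := by rw [nsmul_eq_mul, nsmul_eq_mul, ← add_mul, hcard]

theorem le_bound (hK : 2 ≤ K) (hε : 0 ≤ ε) (hB : 0 ≤ B) (hq0 : 0 ≤ q) (hq1 : q < 1)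
    {e : ℕ → ℕ → ℝ} (h0 : ∀ k ∈ Icc 1 K, e 0 k ≤ B)
    (hrec : ∀ j : ℕ, ∀ k ∈ Icc 1 K,
      e (j + 1) k ≤ ε + (q / ((K : ℝ) - 1)) *
        ((∑ i ∈ Ico 1 k, e (j + 1) i) + (∑ i ∈ Ioc k K, e j i)))
    (j k : ℕ) (hk : k ∈ Icc 1 K) : e j k ≤ bound K ε B q (j * K + k) := by
  induction hn : j * K + k using Nat.strong_induction_on generalizing j k with
  | _ n ih =>
  obtain ⟨hk1, hkK⟩ := mem_Icc.mp hk
  cases j with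
  | zero => exact (h0 k hk).trans (self_le_bound_of_le hε hq1 (by omega))
  | succ j =>
    have hd : (0 : ℝ) < (K : ℝ) - 1 := by
      have : (2 : ℝ) ≤ K := by exact_mod_cast hK
      linarith
    have hjK : (j + 1) * K = j * K + K := by ring
    have window : ∀ j' k', k' ∈ Icc 1 K → n - (K - 1) ≤ j' * K + k' → j' * K + k' < n →
        e j' k' ≤ bound K ε B q (n - (K - 1)) := fun j' k' hk' hlo hhi =>
      (ih _ hhi j' k' hk' rfl).trans (bound_antitone (by omega) hB hq0 hq1.le hlo)
    have hsum := sum_Ico_add_sum_Ioc_le hk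
      (fun i hi => window (j + 1) i (by simp at hi ⊢; omega) (by simp at hi; omega)
        (by simp at hi; omega))
      (fun i hi => window j i (by simp at hi ⊢; omega) (by simp at hi; omega)
        (by simp at hi; omega))
    calc e (j + 1) k
        ≤ ε + (q / ((K : ℝ) - 1)) * ((∑ i ∈ Ico 1 k, e (j + 1) i) + ∑ i ∈ Ioc k K, e j i) :=
          hrec j k hk
      _ ≤ ε + (q / ((K : ℝ) - 1)) * (((K : ℝ) - 1) * bound K ε B q (n - (K - 1))) := by
          gcongr
      _ = ε + q * bound K ε B q (n - (K - 1)) := by field_simp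
      _ ≤ bound K ε B q n := add_mul_bound_le hK hB hq0 hq1 n

end GaussSeidel

theorem gauss_seidel_K_component_general
    (K : ℕ) (hK : 2 ≤ K) (ε B q : ℝ) (hε : 0 ≤ ε) (hB : 0 ≤ B)
    (hq0 : 0 ≤ q) (hq1 : q < 1)
    (e : ℕ → ℕ → ℝ)
    (h0 : ∀ k ∈ Finset.Icc 1 K, e 0 k ≤ B)
    (hrec : ∀ j : ℕ, ∀ k ∈ Finset.Icc 1 K,
      e (j + 1) k ≤ ε + (q / ((K : ℝ) - 1)) *
        ((∑ i ∈ Finset.Ico 1 k, e (j + 1) i) + (∑ i ∈ Finset.Ioc k K, e j i))) :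
    ∀ j : ℕ, ∀ k ∈ Finset.Icc 1 K,
      e (j + 1) k ≤ ε / (1 - q) + B * q ^ (⌈((j * K + k : ℕ) : ℝ) / ((K : ℝ) - 1)⌉₊) := by
  intro j k hk
  have hpos : (j + 1) * K + k - K = j * K + k := by rw [add_mul, one_mul]; omega
  simpa only [GaussSeidel.bound, hpos] using
    GaussSeidel.le_bound hK hε hB hq0 hq1 h0 hrec (j + 1) k hk

/-- `K`-component Gauss–Seidel recursion core of Theorems 3.2 and 3.3.
Components are indexed by `k ∈ {1,…,K}`. -/
theorem gauss_seidel_K_component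
    (K : ℕ) (hK : 2 ≤ K) (ε B q : ℝ) (hε : 0 ≤ ε) (hB : 0 ≤ B)
    (hq0 : 0 ≤ q) (hq1 : q < 1)
    (e : ℕ → ℕ → ℝ) (hnonneg : ∀ j k, 0 ≤ e j k)
    (h0 : ∀ k ∈ Finset.Icc 1 K, e 0 k ≤ B)
    (hrec : ∀ j : ℕ, ∀ k ∈ Finset.Icc 1 K,
      e (j + 1) k ≤ ε + (q / ((K : ℝ) - 1)) *
        ((∑ i ∈ Finset.Ico 1 k, e (j + 1) i) + (∑ i ∈ Finset.Ioc k K, e j i))) :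
    ∀ j : ℕ, ∀ k ∈ Finset.Icc 1 K,
      e (j + 1) k ≤ ε / (1 - q) + B * q ^ (⌈((j * K + k : ℕ) : ℝ) / ((K : ℝ) - 1)⌉₊) :=
  gauss_seidel_K_component_general K hK ε B q hε hB hq0 hq1 e h0 hrec
end

section
/- Let N_h be a positive integer, h = 1/N_h, and t_n = n h for n = 0,…,N_h−1. Let g : [0,1] → ℝ be Lipschitz continuous with constant C, satisfy |g(t)| ≤ G for all t, and have mean zero: ∫_0^1 g(t) dt = 0. Let γ > 0 and let D(m,n) be real numbers with D(m,n) ≥ γ for all m,n ∈ {0,…,N_h−1}; set D(m) = Σ_{n=0}^{N_h−1} D(m,n) and β = ( Σ_{m=0}^{N_h−1} Σ_{n=0}^{N_h−1} ((D(m,n) − γ)/D(m))^2 )^{1/2}. Define the piecewise constant function S : [0,1) → ℝ by S(x) = ( Σ_{n=0}^{N_h−1} g(t_n) D(m,n) ) / D(m) for x ∈ [t_m, t_m + h). Then ( ∫_0^1 S(x)^2 dx )^{1/2} ≤ β ( ∫_0^1 g(t)^2 dt + G C h )^{1/2} + C h / 2. (This is the one-step perturbation bound at the heart of the proofs of Theorems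 3.2 and 3.4: the partition-averaged leakage of one mode into another mode's regression has L^2 norm at most β times the L^2 norm of the leaking shape function, up to O(h) errors; it also yields the paper's bound ‖s̄_k − s_k‖_{L^2} ≤ O(ε + M^2 β Σ_{ℓ≠k}‖s_ℓ‖_{L^2}) in the under-specified case K̄ < K.) -/
/-!
Split each weight as `D m n = γ + (D m n - γ)`. The `γ`-part of the value of `S` on cell `m` is
`γ (∑ₙ g tₙ) / D m`; as `h ∑ₙ g tₙ` is a Riemann sum of the mean-zero, `C`-Lipschitz `g`, we get
`|∑ₙ g tₙ| ≤ C / 2`, and `D m ≥ Nₕ γ` bounds this part by `C h / 2`. By Cauchy–Schwarz in each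
row, the other part is at most `(∑ₙ g(tₙ)²)^(1/2)` times the `ℓ²` norm of row `m` of
`(D m n - γ) / D m`; Minkowski's inequality over the rows yields the factor `β`, and
`h ∑ₙ g(tₙ)² ≤ ∫ g² + G C h` because `g²` is `2GC`-Lipschitz.
-/

open MeasureTheory Set Finset

theorem pos_of_natCast_mul_eq_one {N : ℕ} {h : ℝ} (hNh : N * h = 1) : 0 < h :=
  pos_of_mul_pos_right (hNh ▸ one_pos) (Nat.cast_nonneg N)

theorem Icc_grid_subset_Icc {N k : ℕ} {h : ℝ} (hNh : N * h = 1) (hk : k < N) :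
    Icc (k * h) ((k + 1) * h) ⊆ Icc 0 1 := by
  have hh := pos_of_natCast_mul_eq_one hNh
  have hkN : (k + 1 : ℝ) ≤ N := by exact_mod_cast hk
  exact Set.Icc_subset_Icc (by positivity) (by nlinarith)

theorem floor_mul_toNat_eq {N k : ℕ} {h x : ℝ} (hNh : N * h = 1)
    (hx : x ∈ Ico (k * h) ((k + 1) * h)) : ⌊x * N⌋.toNat = k := by
  have hN : (0 : ℝ) < N := Nat.cast_pos.2 (Nat.pos_of_ne_zero (by rintro rfl; simp at hNh))
  have hk : (0 : ℝ) ≤ k := Nat.cast_nonneg k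
  rw [Int.floor_toNat, Nat.floor_eq_iff (by nlinarith [hx.1])]
  constructor
  · nlinarith [hx.1]
  · nlinarith [hx.2]

theorem integral_zero_one_eq_sum_grid {f : ℝ → ℝ} {h : ℝ} {N : ℕ} (hNh : N * h = 1)
    (hf : ∀ k < N, IntervalIntegrable f volume (k * h) ((k + 1) * h)) :
    ∫ x in (0 : ℝ)..1, f x = ∑ k ∈ range N, ∫ x in (k * h)..((k + 1) * h), f x := by
  have := intervalIntegral.sum_integral_adjacent_intervals (a := fun k : ℕ => (k : ℝ) * h)
    (μ := volume) (f := f) (n := N) (by exact_mod_cast hf)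
  push_cast at this
  rw [this, hNh, zero_mul]

theorem integral_eq_mul_sum_of_eq_on_grid {f : ℝ → ℝ} {u : ℕ → ℝ} {h : ℝ} {N : ℕ}
    (hNh : N * h = 1) (hf : ∀ x ∈ Ico (0 : ℝ) 1, f x = u ⌊x * N⌋.toNat) :
    ∫ x in (0 : ℝ)..1, f x = h * ∑ k ∈ range N, u k := by
  have hh := pos_of_natCast_mul_eq_one hNh
  have hle : ∀ k : ℕ, (k : ℝ) * h ≤ (k + 1) * h := fun k => by nlinarith
  have hcell : ∀ k < N, EqOn f (fun _ => u k) (Ioo (k * h) ((k + 1) * h)) := fun k hk x hx => by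
    have hx01 := Icc_grid_subset_Icc hNh hk (Ioo_subset_Icc_self hx)
    rw [hf x ⟨hx01.1, hx.2.trans_le (Icc_grid_subset_Icc hNh hk (right_mem_Icc.2 (hle k))).2⟩,
      floor_mul_toNat_eq hNh (Ioo_subset_Ico_self hx)]
  have hint : ∀ k < N, IntervalIntegrable f volume (k * h) ((k + 1) * h) := fun k hk =>
    (intervalIntegrable_congr_uIoo (by rw [uIoo_of_le (hle k)]; exact hcell k hk)).2
      intervalIntegrable_const
  rw [integral_zero_one_eq_sum_grid hNh hint, Finset.mul_sum]
  refine Finset.sum_congr rfl fun k hk => ?_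
  rw [intervalIntegral.integral_congr_Ioo_of_le (hle k) (hcell k (mem_range.1 hk)),
    intervalIntegral.integral_const, smul_eq_mul]
  ring

theorem abs_mul_sub_integral_le {f : ℝ → ℝ} {a b L : ℝ} (hab : a ≤ b)
    (hf : IntervalIntegrable f volume a b) (hL : ∀ x ∈ Icc a b, |f x - f a| ≤ L * (x - a)) :
    |(b - a) * f a - ∫ x in a..b, f x| ≤ L * (b - a) ^ 2 / 2 := by
  have hsub : (b - a) * f a - ∫ x in a..b, f x = ∫ x in a..b, (f a - f x) := by
    rw [intervalIntegral.integral_sub intervalIntegrable_const hf,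
      intervalIntegral.integral_const, smul_eq_mul]
  have hramp : ∫ x in a..b, L * (x - a) = L * (b - a) ^ 2 / 2 := by
    rw [intervalIntegral.integral_comp_sub_right (fun x => L * x),
      intervalIntegral.integral_const_mul, integral_id]
    ring
  rw [hsub, ← hramp, ← Real.norm_eq_abs]
  apply intervalIntegral.norm_integral_le_of_norm_le hab (.of_forall fun x hx => ?_)
  · exact (by fun_prop : Continuous fun x => L * (x - a)).intervalIntegrable _ _
  · rw [Real.norm_eq_abs, abs_sub_comm]
    exact hL x (Ioc_subset_Icc_self hx)

theorem abs_mul_sum_sub_integral_le {f : ℝ → ℝ} {L h : ℝ} {N : ℕ} (hNh : N * h = 1)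
    (hf : ∀ x ∈ Icc (0 : ℝ) 1, ∀ z ∈ Icc (0 : ℝ) 1, |f x - f z| ≤ L * |x - z|) :
    |h * ∑ n ∈ range N, f (n * h) - ∫ x in (0 : ℝ)..1, f x| ≤ L * h / 2 := by
  have hh := pos_of_natCast_mul_eq_one hNh
  have hcont : ContinuousOn f (Icc 0 1) :=
    (LipschitzOnWith.of_dist_le' (by simpa only [Real.dist_eq] using hf)).continuousOn
  have hint : ∀ k < N, IntervalIntegrable f volume (k * h) ((k + 1) * h) := fun k hk =>
    (hcont.mono (Icc_grid_subset_Icc hNh hk)).intervalIntegrable_of_Icc (by nlinarith)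
  have hcell : ∀ k < N,
      |h * f (k * h) - ∫ x in (k * h)..((k + 1) * h), f x| ≤ L * h ^ 2 / 2 := by
    intro k hk
    have hsub := Icc_grid_subset_Icc hNh hk
    have hle : (k : ℝ) * h ≤ (k + 1) * h := by nlinarith
    have := abs_mul_sub_integral_le hle (hint k hk) fun x hx => by
      simpa [abs_of_nonneg (sub_nonneg.2 hx.1)] using
        hf x (hsub hx) _ (hsub (left_mem_Icc.2 hle))
    rwa [show ((k : ℝ) + 1) * h - k * h = h by ring] at this
  calc |h * ∑ n ∈ range N, f (n * h) - ∫ x in (0 : ℝ)..1, f x|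
      = |∑ k ∈ range N, (h * f (k * h) - ∫ x in (k * h)..((k + 1) * h), f x)| := by
        rw [integral_zero_one_eq_sum_grid hNh hint, Finset.mul_sum, Finset.sum_sub_distrib]
    _ ≤ ∑ k ∈ range N, L * h ^ 2 / 2 :=
        (abs_sum_le_sum_abs _ _).trans (sum_le_sum fun k hk => hcell k (mem_range.1 hk))
    _ = L * h / 2 := by
        rw [sum_const, card_range, nsmul_eq_mul]
        linear_combination L * h / 2 * hNh

theorem abs_sq_sub_sq_le_of_abs_sub_le {s : Set ℝ} {g : ℝ → ℝ} {C G : ℝ}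
    (hLip : ∀ x ∈ s, ∀ z ∈ s, |g x - g z| ≤ C * |x - z|) (hG : ∀ t ∈ s, |g t| ≤ G) :
    ∀ x ∈ s, ∀ z ∈ s, |g x ^ 2 - g z ^ 2| ≤ 2 * G * C * |x - z| := fun x hx z hz =>
  calc |g x ^ 2 - g z ^ 2| ≤ |g x - g z| * 2 * max |g x| |g z| := by
        simpa using abs_pow_sub_pow_le (g x) (g z) 2
    _ ≤ C * |x - z| * 2 * G := by
        have hxz := hLip x hx z hz
        gcongr
        · linarith [abs_nonneg (g x - g z)]
        · exact max_le (hG x hx) (hG z hz)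
    _ = 2 * G * C * |x - z| := by ring

theorem abs_sum_mul_le_sqrt_mul_sqrt {ι : Type*} (s : Finset ι) (f g : ι → ℝ) :
    |∑ i ∈ s, f i * g i| ≤ √(∑ i ∈ s, f i ^ 2) * √(∑ i ∈ s, g i ^ 2) := by
  refine abs_le.2 ⟨?_, Real.sum_mul_le_sqrt_mul_sqrt s f g⟩
  have := Real.sum_mul_le_sqrt_mul_sqrt s (fun i => -f i) g
  simp only [neg_mul, sum_neg_distrib, neg_sq] at this
  linarith

theorem abs_sum_mul_div_sum_le {ι : Type*} (s : Finset ι) (x w : ι → ℝ) {γ : ℝ} (hγ : 0 < γ)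
    (hw : ∀ i ∈ s, γ ≤ w i) :
    |(∑ i ∈ s, x i * w i) / ∑ i ∈ s, w i| ≤
      √(∑ i ∈ s, x i ^ 2) * √(∑ i ∈ s, ((w i - γ) / ∑ j ∈ s, w j) ^ 2) +
        |∑ i ∈ s, x i| / #s := by
  rcases s.eq_empty_or_nonempty with rfl | hs
  · simp
  set W := ∑ j ∈ s, w j
  have hW : #s * γ ≤ W := by
    simpa [nsmul_eq_mul] using Finset.card_nsmul_le_sum s w γ hw
  have hsγ : 0 < #s * γ := by have := hs.card_pos; positivity
  have hsplit : (∑ i ∈ s, x i * w i) / W =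
      ∑ i ∈ s, x i * ((w i - γ) / W) + γ * (∑ i ∈ s, x i) / W := by
    simp only [mul_div_assoc', ← Finset.sum_div, Finset.mul_sum, ← add_div,
      ← Finset.sum_add_distrib]
    congr 1
    exact Finset.sum_congr rfl fun i _ => by ring
  rw [hsplit]
  refine (abs_add_le _ _).trans (add_le_add (abs_sum_mul_le_sqrt_mul_sqrt s _ _) ?_)
  calc |(γ * ∑ i ∈ s, x i) / W| = γ * |∑ i ∈ s, x i| / W := by
        rw [abs_div, abs_mul, abs_of_pos hγ, abs_of_pos (hsγ.trans_le hW)]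
    _ ≤ γ * |∑ i ∈ s, x i| / (#s * γ) := by gcongr
    _ = |∑ i ∈ s, x i| / #s := by field_simp

theorem sqrt_sum_sq_le_of_abs_le {ι : Type*} (s : Finset ι) {v a b : ι → ℝ}
    (hv : ∀ i ∈ s, |v i| ≤ a i + b i) :
    √(∑ i ∈ s, v i ^ 2) ≤ √(∑ i ∈ s, a i ^ 2) + √(∑ i ∈ s, b i ^ 2) := by
  have ha := Real.sq_sqrt (sum_nonneg fun i (_ : i ∈ s) => sq_nonneg (a i))
  have hb := Real.sq_sqrt (sum_nonneg fun i (_ : i ∈ s) => sq_nonneg (b i))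
  rw [Real.sqrt_le_left (by positivity)]
  calc ∑ i ∈ s, v i ^ 2 ≤ ∑ i ∈ s, (a i + b i) ^ 2 := sum_le_sum fun i hi => by
        simpa only [sq_abs] using pow_le_pow_left₀ (abs_nonneg _) (hv i hi) 2
    _ = ∑ i ∈ s, a i ^ 2 + 2 * ∑ i ∈ s, a i * b i + ∑ i ∈ s, b i ^ 2 := by
        simp only [add_sq, sum_add_distrib, mul_sum, mul_assoc]
    _ ≤ _ := by
        nlinarith [Real.sum_mul_le_sqrt_mul_sqrt s a b]

theorem sqrt_sum_sq_weighted_mean_le {κ ι : Type*} (s : Finset κ) (t : Finset ι) (x : ι → ℝ)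
    (w : κ → ι → ℝ) {γ : ℝ} (hγ : 0 < γ) (hw : ∀ m ∈ s, ∀ i ∈ t, γ ≤ w m i) :
    √(∑ m ∈ s, ((∑ i ∈ t, x i * w m i) / ∑ i ∈ t, w m i) ^ 2) ≤
      √(∑ i ∈ t, x i ^ 2) * √(∑ m ∈ s, ∑ i ∈ t, ((w m i - γ) / ∑ j ∈ t, w m j) ^ 2) +
        √(#s : ℝ) * (|∑ i ∈ t, x i| / #t) := by
  set r : κ → ℝ := fun m => √(∑ i ∈ t, ((w m i - γ) / ∑ j ∈ t, w m j) ^ 2)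
  have hr : ∀ m, r m ^ 2 = ∑ i ∈ t, ((w m i - γ) / ∑ j ∈ t, w m j) ^ 2 := fun m =>
    Real.sq_sqrt (sum_nonneg fun i _ => sq_nonneg _)
  calc √(∑ m ∈ s, ((∑ i ∈ t, x i * w m i) / ∑ i ∈ t, w m i) ^ 2)
      ≤ √(∑ m ∈ s, (√(∑ i ∈ t, x i ^ 2) * r m) ^ 2) +
          √(∑ m ∈ s, (|∑ i ∈ t, x i| / #t) ^ 2) :=
        sqrt_sum_sq_le_of_abs_le s fun m hm => abs_sum_mul_div_sum_le t x (w m) hγ (hw m hm)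
    _ = _ := by
        simp only [mul_pow, hr, ← mul_sum, sum_const, nsmul_eq_mul]
        rw [Real.sqrt_mul (sq_nonneg _), Real.sqrt_sq (Real.sqrt_nonneg _),
          Real.sqrt_mul (Nat.cast_nonneg _), Real.sqrt_sq (by positivity)]

theorem one_step_perturbation_bound_general
    (Nh : ℕ) (hNh : 0 < Nh) (h : ℝ) (hh : h = 1 / (Nh : ℝ))
    (g : ℝ → ℝ) (C G : ℝ)
    (hLip : ∀ x ∈ Set.Icc (0:ℝ) 1, ∀ z ∈ Set.Icc (0:ℝ) 1, |g x - g z| ≤ C * |x - z|)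
    (hG : ∀ t ∈ Set.Icc (0:ℝ) 1, |g t| ≤ G)
    (hmean : (∫ t in (0:ℝ)..1, g t) = 0)
    (γ : ℝ) (hγ : 0 < γ)
    (D : ℕ → ℕ → ℝ)
    (hD : ∀ m ∈ Finset.range Nh, ∀ n ∈ Finset.range Nh, γ ≤ D m n)
    (Dm : ℕ → ℝ) (hDm : ∀ m, Dm m = ∑ n ∈ Finset.range Nh, D m n)
    (β : ℝ)
    (hβ : β = Real.sqrt
      (∑ m ∈ Finset.range Nh, ∑ n ∈ Finset.range Nh, ((D m n - γ) / Dm m) ^ 2))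
    (S : ℝ → ℝ)
    (hS : ∀ x ∈ Set.Ico (0:ℝ) 1,
      S x = (∑ n ∈ Finset.range Nh, g ((n : ℝ) * h) * D (⌊x * (Nh : ℝ)⌋.toNat) n) /
        Dm (⌊x * (Nh : ℝ)⌋.toNat)) :
    Real.sqrt (∫ x in (0:ℝ)..1, S x ^ 2) ≤
      β * Real.sqrt ((∫ t in (0:ℝ)..1, g t ^ 2) + G * C * h) + C * h / 2 := by
  have hNh' : (Nh : ℝ) * h = 1 := by rw [hh]; field_simp
  have hh0 : 0 < h := pos_of_natCast_mul_eq_one hNh'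
  have hβ0 : 0 ≤ β := hβ ▸ Real.sqrt_nonneg _
  have hsum : |∑ n ∈ range Nh, g (n * h)| / Nh ≤ C * h / 2 := by
    have := abs_mul_sum_sub_integral_le hNh' hLip
    rw [hmean, sub_zero, abs_mul, abs_of_pos hh0] at this
    rwa [div_eq_mul_one_div, ← hh, mul_comm]
  have hsumsq : h * ∑ n ∈ range Nh, g (n * h) ^ 2 ≤ (∫ t in (0:ℝ)..1, g t ^ 2) + G * C * h := by
    have := abs_mul_sum_sub_integral_le hNh' (abs_sq_sub_sq_le_of_abs_sub_le hLip hG)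
    linarith [le_abs_self (h * ∑ n ∈ range Nh, g (n * h) ^ 2 - ∫ t in (0:ℝ)..1, g t ^ 2)]
  have hS2 : ∫ x in (0:ℝ)..1, S x ^ 2 =
      h * ∑ m ∈ range Nh, ((∑ n ∈ range Nh, g (n * h) * D m n) / ∑ n ∈ range Nh, D m n) ^ 2 :=
    integral_eq_mul_sum_of_eq_on_grid hNh' fun x hx => by rw [hS x hx, hDm]
  have hrows := sqrt_sum_sq_weighted_mean_le (range Nh) (range Nh) (fun n => g (n * h)) D hγ hD
  simp only [hDm] at hβ
  rw [← hβ, card_range] at hrows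
  have hsqrt : √h * √Nh = 1 := by rw [← Real.sqrt_mul hh0.le, mul_comm, hNh', Real.sqrt_one]
  rw [hS2, Real.sqrt_mul hh0.le]
  calc √h * √(∑ m ∈ range Nh, ((∑ n ∈ range Nh, g (n * h) * D m n) / ∑ n ∈ range Nh, D m n) ^ 2)
      ≤ √h * (√(∑ n ∈ range Nh, g (n * h) ^ 2) * β + √Nh * (C * h / 2)) := by
        gcongr
        exact hrows.trans (by gcongr)
    _ = β * √(h * ∑ n ∈ range Nh, g (n * h) ^ 2) + C * h / 2 := by
        rw [Real.sqrt_mul hh0.le]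
        linear_combination C * h / 2 * hsqrt
    _ ≤ β * √((∫ t in (0:ℝ)..1, g t ^ 2) + G * C * h) + C * h / 2 := by gcongr

/-- one-step perturbation bound at the heart of Theorems 3.2 and 3.4.
The partition-averaged leakage `S` of a mean-zero Lipschitz shape function `g` has `L²`
norm at most `β` times the (discretization-corrected) `L²` norm of `g`, up to `O(h)`. -/
theorem one_step_perturbation_bound
    (Nh : ℕ) (hNh : 0 < Nh) (h : ℝ) (hh : h = 1 / (Nh : ℝ))
    (g : ℝ → ℝ) (C G : ℝ) (hC : 0 ≤ C)
    (hLip : ∀ x ∈ Set.Icc (0:ℝ) 1, ∀ z ∈ Set.Icc (0:ℝ) 1, |g x - g z| ≤ C * |x - z|)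
    (hG : ∀ t ∈ Set.Icc (0:ℝ) 1, |g t| ≤ G)
    (hmean : (∫ t in (0:ℝ)..1, g t) = 0)
    (γ : ℝ) (hγ : 0 < γ)
    (D : ℕ → ℕ → ℝ)
    (hD : ∀ m ∈ Finset.range Nh, ∀ n ∈ Finset.range Nh, γ ≤ D m n)
    (Dm : ℕ → ℝ) (hDm : ∀ m, Dm m = ∑ n ∈ Finset.range Nh, D m n)
    (β : ℝ)
    (hβ : β = Real.sqrt
      (∑ m ∈ Finset.range Nh, ∑ n ∈ Finset.range Nh, ((D m n - γ) / Dm m) ^ 2))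
    (S : ℝ → ℝ)
    (hS : ∀ x ∈ Set.Ico (0:ℝ) 1,
      S x = (∑ n ∈ Finset.range Nh, g ((n : ℝ) * h) * D (⌊x * (Nh : ℝ)⌋.toNat) n) /
        Dm (⌊x * (Nh : ℝ)⌋.toNat)) :
    Real.sqrt (∫ x in (0:ℝ)..1, S x ^ 2) ≤
      β * Real.sqrt ((∫ t in (0:ℝ)..1, g t ^ 2) + G * C * h) + C * h / 2 :=
  one_step_perturbation_bound_general Nh hNh h hh g C G hLip hG hmean γ hγ D hD Dm hDm β hβ S hS
end

section
/- Let K ≥ 2 and M_0 ≥ 0 be integers, ε ≥ 0, B ≥ 0, and Q ≥ 0 with 2Q < 1. Suppose nonnegative real numbers e_{c,n,k}^{(j)} and e_{s,n,k}^{(j)}, indexed by n ∈ {−M_0,…,M_0}, k ∈ {1,…,K} and j ≥ 0, satisfy e_{c,n,k}^{(0)} + e_{s,n,k}^{(0)} ≤ B for all n,k, and for every j ≥ 0 and all n,k: e_{c,n,k}^{(j+1)} ≤ ε + Q · max_{m,k'} ( e_{c,m,k'}^{(j)} + e_{s,m,k'}^{(j)} ) and e_{s,n,k}^{(j+1)}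 ≤ ε + Q · max_{m,k'} ( e_{c,m,k'}^{(j)} + e_{s,m,k'}^{(j)} ), where the maximum is over m ∈ {−M_0,…,M_0} and k' ∈ {1,…,K}. Then for every j ≥ 1 and all n,k: e_{c,n,k}^{(j)} ≤ ε/(1−2Q) + (B/2)(2Q)^j and e_{s,n,k}^{(j)} ≤ ε/(1−2Q) + (B/2)(2Q)^j. (This is the quantitative iteration core of Theorem 4.1 on the convergence of the multiresolution mode decomposition: in the paper e_{c,n,k}^{(j)} = ‖s_{cn,k}^{(j)}‖_{L^2} and e_{s,n,k}^{(j)} = ‖s_{sn,k}^{(j)}‖_{L^2} are the L^2 norms of the cosine- and sine-type residual shape functions of the K MIMFs at sweep j, Q = β(2M_0+1)(K−1) with β the well-differentiation parameter of the phase functions, and ε is the per-step regression accuracy.) -/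
/-- The maximum over all frequency bands `n ∈ {−M₀,…,M₀}` and components
`k ∈ {1,…,K}` of the sum of the cosine- and sine-type residual norms at sweep `j`.
(For `K ≥ 1` the index set is nonempty and this supremum is the genuine maximum.) -/
noncomputable def mmdMaxSum (K M0 : ℕ) (ec es : ℕ → ℤ → ℕ → ℝ) (j : ℕ) : ℝ :=
  ⨆ p : ↥(Finset.Icc (-(M0 : ℤ)) (M0 : ℤ) ×ˢ Finset.Icc 1 K),
    ec j (p : ℤ × ℕ).1 (p : ℤ × ℕ).2 + es j (p : ℤ × ℕ).1 (p : ℤ × ℕ).2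

/-! The summed residual `S j := mmdMaxSum K M0 ec es j` obeys the linear recursion
`S (j+1) ≤ 2ε + 2Q · S j` with `S 0 ≤ B`, hence `S j ≤ 2ε/(1−2Q) + B (2Q)^j`; one more
sweep `e^{(j+1)} ≤ ε + Q · S j` halves the transient term. -/

theorem le_div_one_sub_add_mul_pow {s : ℕ → ℝ} {a r B : ℝ} (ha : 0 ≤ a) (hr0 : 0 ≤ r)
    (hr1 : r < 1) (h0 : s 0 ≤ B) (hsucc : ∀ j, s (j + 1) ≤ a + r * s j) (j : ℕ) :
    s j ≤ a / (1 - r) + B * r ^ j := by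
  have hpos : 0 < 1 - r := by linarith
  induction j with
  | zero => simpa using add_le_add (div_nonneg ha hpos.le) h0
  | succ j ih =>
    calc s (j + 1) ≤ a + r * (a / (1 - r) + B * r ^ j) :=
          (hsucc j).trans (by gcongr)
      _ = a / (1 - r) + B * r ^ (j + 1) := by field_simp; ring

theorem mmdMaxSum_le {K M0 : ℕ} (hK : 1 ≤ K) {ec es : ℕ → ℤ → ℕ → ℝ} {j : ℕ} {c : ℝ}
    (h : ∀ n ∈ Finset.Icc (-(M0 : ℤ)) (M0 : ℤ), ∀ k ∈ Finset.Icc 1 K,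
      ec j n k + es j n k ≤ c) :
    mmdMaxSum K M0 ec es j ≤ c := by
  have : Nonempty ↥(Finset.Icc (-(M0 : ℤ)) (M0 : ℤ) ×ˢ Finset.Icc 1 K) :=
    ⟨⟨(0, 1), Finset.mem_product.2 ⟨by simp, by simpa using hK⟩⟩⟩
  refine ciSup_le fun ⟨⟨n, k⟩, hp⟩ => ?_
  obtain ⟨hn, hk⟩ := Finset.mem_product.1 hp
  exact h n hn k hk

theorem mmd_iteration_core_general
    (K M0 : ℕ) (hK : 2 ≤ K) (ε B Q : ℝ)
    (hε : 0 ≤ ε) (hQ0 : 0 ≤ Q) (hQ : 2 * Q < 1)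
    (ec es : ℕ → ℤ → ℕ → ℝ)
    (h0 : ∀ n ∈ Finset.Icc (-(M0 : ℤ)) (M0 : ℤ), ∀ k ∈ Finset.Icc 1 K,
      ec 0 n k + es 0 n k ≤ B)
    (hrecc : ∀ j : ℕ, ∀ n ∈ Finset.Icc (-(M0 : ℤ)) (M0 : ℤ), ∀ k ∈ Finset.Icc 1 K,
      ec (j + 1) n k ≤ ε + Q * mmdMaxSum K M0 ec es j)
    (hrecs : ∀ j : ℕ, ∀ n ∈ Finset.Icc (-(M0 : ℤ)) (M0 : ℤ), ∀ k ∈ Finset.Icc 1 K,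
      es (j + 1) n k ≤ ε + Q * mmdMaxSum K M0 ec es j) :
    ∀ j : ℕ, 1 ≤ j → ∀ n ∈ Finset.Icc (-(M0 : ℤ)) (M0 : ℤ), ∀ k ∈ Finset.Icc 1 K,
      ec j n k ≤ ε / (1 - 2 * Q) + (B / 2) * (2 * Q) ^ j ∧
      es j n k ≤ ε / (1 - 2 * Q) + (B / 2) * (2 * Q) ^ j := by
  have hK1 : 1 ≤ K := by omega
  have hS : ∀ j, mmdMaxSum K M0 ec es j ≤ 2 * ε / (1 - 2 * Q) + B * (2 * Q) ^ j :=
    le_div_one_sub_add_mul_pow (by positivity) (by positivity) hQ (mmdMaxSum_le hK1 h0)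
      fun j => mmdMaxSum_le hK1 fun n hn k hk => by
        linarith [hrecc j n hn k hk, hrecs j n hn k hk]
  intro j hj n hn k hk
  obtain ⟨i, rfl⟩ := Nat.exists_eq_add_of_le' hj
  have hsweep : ε + Q * mmdMaxSum K M0 ec es i ≤
      ε / (1 - 2 * Q) + (B / 2) * (2 * Q) ^ (i + 1) :=
    calc ε + Q * mmdMaxSum K M0 ec es i
        ≤ ε + Q * (2 * ε / (1 - 2 * Q) + B * (2 * Q) ^ i) := by gcongr; exact hS i
      _ = ε / (1 - 2 * Q) + (B / 2) * (2 * Q) ^ (i + 1) := by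
        have : 1 - 2 * Q ≠ 0 := by linarith
        linear_combination -div_mul_cancel₀ ε this
  exact ⟨(hrecc i n hn k hk).trans hsweep, (hrecs i n hn k hk).trans hsweep⟩

/-- quantitative iteration core of Theorem 4.1 (convergence of the
multiresolution mode decomposition), with `Q = β(2M₀+1)(K−1)`. -/
theorem mmd_iteration_core
    (K M0 : ℕ) (hK : 2 ≤ K) (ε B Q : ℝ)
    (hε : 0 ≤ ε) (hB : 0 ≤ B) (hQ0 : 0 ≤ Q) (hQ : 2 * Q < 1)
    (ec es : ℕ → ℤ → ℕ → ℝ)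
    (hnn : ∀ j n k, 0 ≤ ec j n k ∧ 0 ≤ es j n k)
    (h0 : ∀ n ∈ Finset.Icc (-(M0 : ℤ)) (M0 : ℤ), ∀ k ∈ Finset.Icc 1 K,
      ec 0 n k + es 0 n k ≤ B)
    (hrecc : ∀ j : ℕ, ∀ n ∈ Finset.Icc (-(M0 : ℤ)) (M0 : ℤ), ∀ k ∈ Finset.Icc 1 K,
      ec (j + 1) n k ≤ ε + Q * mmdMaxSum K M0 ec es j)
    (hrecs : ∀ j : ℕ, ∀ n ∈ Finset.Icc (-(M0 : ℤ)) (M0 : ℤ), ∀ k ∈ Finset.Icc 1 K,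
      es (j + 1) n k ≤ ε + Q * mmdMaxSum K M0 ec es j) :
    ∀ j : ℕ, 1 ≤ j → ∀ n ∈ Finset.Icc (-(M0 : ℤ)) (M0 : ℤ), ∀ k ∈ Finset.Icc 1 K,
      ec j n k ≤ ε / (1 - 2 * Q) + (B / 2) * (2 * Q) ^ j ∧
      es j n k ≤ ε / (1 - 2 * Q) + (B / 2) * (2 * Q) ^ j :=
  mmd_iteration_core_general K M0 hK ε B Q hε hQ0 hQ ec es h0 hrecc hrecs
end
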